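/- arXiv:1310.2270 — 3 statements merged into one kernel-verified Lean document; each statement's English description precedes it below -/
import Mathlib

section
/- Let m ≥ 3 be an integer. Then the kernel of the reduction homomorphism GL_N(ℤ) → GL_N(ℤ/mℤ) is torsion-free. -/
/-!
Write a torsion element `g ≠ 1` of the kernel, of prime order `p`, as `g = 1 + d • A` with `d` the
gcd of the entries of `g - 1`, so that `m ∣ d` and the entries of `A` are coprime. In the
expansion of `(1 + d • A) ^ p = 1` every term of degree `k ≥ 2` is divisible by `d²`, and even by
`p d²` when `p ∣ d` and `p` is odd (as `p ∣ C(p, k)` for `0 < k < p`). Comparing with the linear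
term `p d A` gives `d ∣ 2 A`, hence `d ∣ 2`, contradicting `d ≥ m ≥ 3`.
-/

open Finset

theorem Int.prime_mul_sq_dvd_choose_mul_pow {p k : ℕ} (hp : p.Prime) (hp2 : p ≠ 2) {d : ℤ}
    (hpd : (p : ℤ) ∣ d) (hk : 2 ≤ k) (hkp : k ≤ p) : (p : ℤ) * d ^ 2 ∣ p.choose k * d ^ k := by
  rcases hkp.lt_or_eq with hkp | rfl
  · exact mul_dvd_mul (Int.natCast_dvd_natCast.2 (hp.dvd_choose_self (by omega) hkp))
      (pow_dvd_pow d hk)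
  · have hp3 : 3 ≤ k := by have := hp.two_le; omega
    calc (k : ℤ) * d ^ 2 ∣ d ^ 3 := by rw [pow_succ' d 2]; exact mul_dvd_mul_right hpd _
      _ ∣ k.choose k * d ^ k := Dvd.dvd.mul_left (pow_dvd_pow d hp3) _

theorem Int.dvd_two_mul_of_sum_choose_mul_pow_eq {p : ℕ} (hp : p.Prime) {d : ℤ} (hd : d ≠ 0)
    {a : ℕ → ℤ} (h : ∑ k ∈ Finset.range (p + 1), p.choose k * d ^ k * a k = a 0) : d ∣ 2 * a 1 := by
  set tail := ∑ k ∈ Ico 2 (p + 1), p.choose k * d ^ k * a k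
  have hlinear : d * (p * a 1) = -tail := by
    rw [sum_range_eq_add_Ico _ (by omega), sum_eq_sum_Ico_succ_bot (by linarith [hp.two_le])] at h
    simp only [Nat.choose_zero_right, Nat.choose_one_right, pow_zero, pow_one, Nat.cast_one,
      one_mul] at h
    linear_combination h
  have hd_dvd_p : d ∣ p * a 1 := by
    refine (mul_dvd_mul_iff_left hd).1 ?_
    rw [hlinear, ← sq]
    exact (dvd_sum fun k hk => (pow_dvd_pow d (mem_Ico.1 hk).1).mul_left _ |>.mul_right _).neg_right
  obtain rfl | hp2 := eq_or_ne p 2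
  · exact hd_dvd_p
  refine Dvd.dvd.mul_left ?_ 2
  by_cases hpd : (p : ℤ) ∣ d
  · have htail : (p : ℤ) * d ^ 2 ∣ tail := dvd_sum fun k hk =>
      (Int.prime_mul_sq_dvd_choose_mul_pow hp hp2 hpd (mem_Ico.1 hk).1
        (Nat.lt_succ_iff.1 (mem_Ico.1 hk).2)).mul_right _
    have : (p : ℤ) * d * d ∣ p * d * a 1 := by
      rw [mul_assoc, ← sq, show (p : ℤ) * d * a 1 = d * (p * a 1) by ring, hlinear]
      exact htail.neg_right
    exact (mul_dvd_mul_iff_left (mul_ne_zero (by exact_mod_cast hp.ne_zero) hd)).1 this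
  · exact ((Nat.prime_iff_prime_int.1 hp).coprime_iff_not_dvd.2 hpd).symm.dvd_of_dvd_mul_left
      hd_dvd_p

theorem Subgroup.eq_one_of_isOfFinOrder_of_forall_pow_prime_eq_one {G : Type*} [Group G]
    {H : Subgroup G} (hH : ∀ h ∈ H, ∀ p : ℕ, p.Prime → h ^ p = 1 → h = 1) {g : G} (hg : g ∈ H)
    (hfin : IsOfFinOrder g) : g = 1 := by
  by_contra hg1
  set p := (orderOf g).minFac
  have hp : p.Prime := Nat.minFac_prime (mt orderOf_eq_one_iff.1 hg1)
  have hord : orderOf (g ^ (orderOf g / p)) = p :=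
    orderOf_pow_orderOf_div hfin.orderOf_pos.ne' (Nat.minFac_dvd _)
  have h1 : g ^ (orderOf g / p) = 1 :=
    hH _ (pow_mem hg _) p hp (by simpa only [hord] using pow_orderOf_eq_one (g ^ (orderOf g / p)))
  exact hp.one_lt.ne' (by rw [← hord, h1, orderOf_one])

namespace Matrix

variable {n : Type*} [DecidableEq n]

theorem exists_eq_one_add_smul_of_map_intCast_eq_one {m : ℕ} {M : Matrix n n ℤ}
    (h : M.map (Int.cast : ℤ → ZMod m) = 1) : ∃ A : Matrix n n ℤ, M = 1 + (m : ℤ) • A := by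
  have hdvd (i j : n) : (m : ℤ) ∣ (M - 1) i j := by
    rw [← ZMod.intCast_zmod_eq_zero_iff_dvd, sub_apply, Int.cast_sub,
      ← map_apply (f := Int.cast), h]
    rcases eq_or_ne i j with rfl | hij <;> simp [*]
  choose A hA using hdvd
  exact ⟨of A, by ext i j; simp [← hA]⟩

variable [Fintype n]

theorem dvd_two_mul_of_one_add_smul_pow_eq_one {p : ℕ} (hp : p.Prime) {d : ℤ} (hd : d ≠ 0)
    {A : Matrix n n ℤ} (h : (1 + d • A) ^ p = 1) (i j : n) : d ∣ 2 * A i j := by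
  have hsum : ∑ k ∈ range (p + 1), p.choose k * d ^ k * (A ^ k) i j = (A ^ 0) i j := by
    rw [add_comm, (Commute.one_right _).add_pow] at h
    simp only [one_pow, mul_one, smul_pow, ← nsmul_eq_mul'] at h
    simpa only [sum_apply, smul_apply, smul_eq_mul, Int.nsmul_eq_mul, pow_zero, mul_assoc]
      using congrFun₂ h i j
  simpa using Int.dvd_two_mul_of_sum_choose_mul_pow_eq hp hd hsum

theorem eq_zero_of_one_add_smul_pow_eq_one {p : ℕ} (hp : p.Prime) {d : ℤ} (hd : 3 ≤ |d|)
    {A : Matrix n n ℤ} (h : (1 + d • A) ^ p = 1) : A = 0 := by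
  by_contra hA
  obtain ⟨i, j, hij⟩ : ∃ i j, A i j ≠ 0 := by simpa [← Matrix.ext_iff] using hA
  set c := univ.gcd (Function.uncurry A)
  obtain ⟨B, hAB, hB⟩ := extract_gcd (Function.uncurry A) (s := univ) ⟨(i, j), mem_univ _⟩
  have hc : c ≠ 0 := fun hc => hij (gcd_eq_zero_iff.1 hc (i, j) (mem_univ _))
  have hA : A = c • of (Function.curry B) := by
    ext i j; exact hAB (i, j) (mem_univ _)
  rw [hA, smul_smul] at h
  have hdc : d * c ≠ 0 := mul_ne_zero (by rintro rfl; simp at hd) hc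
  have h2 : d * c ∣ 2 := by
    have := dvd_gcd (s := univ) (f := fun x : n × n => 2 * B x) fun x _ =>
      dvd_two_mul_of_one_add_smul_pow_eq_one hp hdc h x.1 x.2
    simpa [Finset.gcd_mul_left, hB] using this
  have := Int.le_of_dvd two_pos ((abs_dvd _ _).2 h2)
  rw [abs_mul] at this
  nlinarith [Int.one_le_abs hc]

theorem GeneralLinearGroup.eq_one_of_mem_ker_map_of_pow_eq_one {m : ℕ} (hm : 3 ≤ m) {g : GL n ℤ}
    (hg : g ∈ (map (Int.castRingHom (ZMod m))).ker) {p : ℕ} (hp : p.Prime) (hgp : g ^ p = 1) :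
    g = 1 := by
  obtain ⟨A, hA⟩ := exists_eq_one_add_smul_of_map_intCast_eq_one (congrArg Units.val hg)
  have hpow : (1 + (m : ℤ) • A) ^ p = 1 := by rw [← hA, ← Units.val_pow_eq_pow_val, hgp]; rfl
  have hA0 := eq_zero_of_one_add_smul_pow_eq_one hp (by rw [Nat.abs_cast]; exact_mod_cast hm) hpow
  exact Units.ext (by rw [hA, hA0, smul_zero, add_zero]; rfl)

end Matrix

/-- Minkowski's lemma: for `m ≥ 3`, the kernel of the reduction map
`GL_N(ℤ) → GL_N(ℤ/mℤ)` is torsion-free. -/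
theorem minkowski_kernel_torsionFree (N m : ℕ) (hm : 3 ≤ m)
    (g : Matrix.GeneralLinearGroup (Fin N) ℤ)
    (hg : g ∈ (Matrix.GeneralLinearGroup.map (Int.castRingHom (ZMod m))).ker)
    (hfin : IsOfFinOrder g) : g = 1 :=
  Subgroup.eq_one_of_isOfFinOrder_of_forall_pow_prime_eq_one
    (fun _ hh _ => Matrix.GeneralLinearGroup.eq_one_of_mem_ker_map_of_pow_eq_one hm hh) hg hfin
end

section
/- For every positive integer r, ∏_{j=1}^r ζ(2j) < 2, where ζ is the Riemann zeta function. -/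
/-!
For `n ≥ 2` we have `n ^ (-2j) ≤ 4 ^ (1 - j) n ^ (-2)`, so `ζ(2j) ≤ 1 + c / 4 ^ (j - 1)` with
`c = ζ(2) - 1 = π² / 6 - 1`. The partial products `P_s = ∏_{j ≤ s} ζ(2j)` then satisfy
`P_s ≤ 2 - (8c/3) / 4 ^ s` by induction on `s ≥ 2`: the bound is preserved under multiplication
by `1 + c / 4 ^ s`, and at `s = 2` it is the numerical inequality `ζ(2) ζ(4) = π⁶ / 540 ≤ 2 - c / 6`.
-/

open Real Finset

noncomputable def zetaSum (k : ℕ) : ℝ := ∑' n : ℕ, 1 / ((n : ℝ) + 1) ^ k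

theorem hasSum_one_div_nat_add_one_pow {k : ℕ} {a : ℝ} (hk : k ≠ 0)
    (h : HasSum (fun n : ℕ => 1 / (n : ℝ) ^ k) a) :
    HasSum (fun n : ℕ => 1 / ((n : ℝ) + 1) ^ k) a := by
  simpa [hk] using (hasSum_nat_add_iff' 1).mpr h

theorem zetaSum_two : zetaSum 2 = π ^ 2 / 6 :=
  (hasSum_one_div_nat_add_one_pow two_ne_zero hasSum_zeta_two).tsum_eq

theorem zetaSum_four : zetaSum 4 = π ^ 4 / 90 :=
  (hasSum_one_div_nat_add_one_pow four_ne_zero hasSum_zeta_four).tsum_eq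

theorem zetaSum_nonneg (k : ℕ) : 0 ≤ zetaSum k :=
  tsum_nonneg fun _ => by positivity

theorem summable_one_div_nat_add_one_pow {k : ℕ} (hk : 1 < k) :
    Summable (fun n : ℕ => 1 / ((n : ℝ) + 1) ^ k) := by
  simpa using (summable_nat_add_iff 1).mpr (summable_one_div_nat_pow.mpr hk)

theorem summable_one_div_nat_add_two_pow {k : ℕ} (hk : 1 < k) :
    Summable (fun n : ℕ => 1 / ((n : ℝ) + 2) ^ k) := by
  simpa [add_assoc, one_add_one_eq_two] using
    (summable_nat_add_iff 1).mpr (summable_one_div_nat_add_one_pow hk)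

theorem zetaSum_eq_one_add {k : ℕ} (hk : 1 < k) :
    zetaSum k = 1 + ∑' n : ℕ, 1 / ((n : ℝ) + 2) ^ k := by
  rw [zetaSum, (summable_one_div_nat_add_one_pow hk).tsum_eq_zero_add]
  norm_num [add_assoc, one_add_one_eq_two]

theorem zetaSum_add_le {k : ℕ} (hk : 1 < k) (m : ℕ) :
    zetaSum (k + m) ≤ 1 + (zetaSum k - 1) / 2 ^ m := by
  rw [zetaSum_eq_one_add (by omega), zetaSum_eq_one_add hk, add_sub_cancel_left,
    ← tsum_div_const]
  gcongr 1 + ?_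
  refine Summable.tsum_le_tsum (fun n => ?_) (summable_one_div_nat_add_two_pow (by omega))
    ((summable_one_div_nat_add_two_pow hk).div_const _)
  have hpow : (2 : ℝ) ^ m ≤ ((n : ℝ) + 2) ^ m := by gcongr; linarith [n.cast_nonneg (α := ℝ)]
  rw [div_div, pow_add]
  gcongr

/-- `8 c / 3` is the least constant `B` for which the bound `2 - B / 4 ^ s` survives
multiplication by `1 + c / 4 ^ s`. -/
theorem prod_Icc_le_two_sub_of_le_one_add {a : ℕ → ℝ} {c : ℝ} {s₀ s : ℕ}
    (ha₀ : ∀ j, 0 ≤ a j) (ha : ∀ j, a (j + 1) ≤ 1 + c / 4 ^ j)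
    (hs₀ : ∏ j ∈ Icc 1 s₀, a j ≤ 2 - 8 * c / 3 / 4 ^ s₀) (hs : s₀ ≤ s) :
    ∏ j ∈ Icc 1 s, a j ≤ 2 - 8 * c / 3 / 4 ^ s := by
  induction s, hs using Nat.le_induction with
  | base => exact hs₀
  | succ s _ ih =>
    rw [prod_Icc_succ_top (by omega)]
    calc (∏ j ∈ Icc 1 s, a j) * a (s + 1)
        ≤ (2 - 8 * c / 3 / 4 ^ s) * (1 + c / 4 ^ s) :=
          mul_le_mul ih (ha s) (ha₀ _) ((prod_nonneg fun j _ => ha₀ j).trans ih)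
      _ = 2 - 8 * c / 3 / 4 ^ (s + 1) - 8 * c ^ 2 / 3 / (4 ^ s) ^ 2 := by
          rw [pow_succ]; field_simp; ring
      _ ≤ 2 - 8 * c / 3 / 4 ^ (s + 1) := by
          have : 0 ≤ 8 * c ^ 2 / 3 / (4 ^ s) ^ 2 := by positivity
          linarith

theorem pi_sq_lt_d2 : π ^ 2 < 9.9225 := by
  nlinarith [pi_lt_d2, pi_pos]

theorem zetaSum_two_mul_le (j : ℕ) : zetaSum (2 * (j + 1)) ≤ 1 + (π ^ 2 / 6 - 1) / 4 ^ j := by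
  simpa [← zetaSum_two, mul_add, add_comm, pow_mul, (by norm_num : (2 : ℝ) ^ 2 = 4)] using
    zetaSum_add_le one_lt_two (2 * j)

theorem prod_Icc_one_two_zetaSum_le :
    ∏ j ∈ Icc 1 2, zetaSum (2 * j) ≤ 2 - 8 * (π ^ 2 / 6 - 1) / 3 / 4 ^ 2 := by
  rw [show Icc 1 2 = {1, 2} from rfl, prod_pair (by norm_num)]
  norm_num only [zetaSum_two, zetaSum_four]
  have : π ^ 6 < 977 := by
    calc π ^ 6 = (π ^ 2) ^ 3 := by ring
      _ < 9.9225 ^ 3 := by gcongr; exact pi_sq_lt_d2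
      _ < 977 := by norm_num
  nlinarith [pi_sq_lt_d2]

theorem prod_zeta_even_lt_two_general (r : ℕ) :
    (∏ j ∈ Finset.Icc 1 r, ∑' n : ℕ, (1 : ℝ) / ((n : ℝ) + 1) ^ (2 * j)) < 2 := by
  change ∏ j ∈ Icc 1 r, zetaSum (2 * j) < 2
  obtain _ | _ | r := r
  · simp
  · rw [zero_add, Icc_self, prod_singleton, mul_one, zetaSum_two]
    linarith [pi_sq_lt_d2]
  · have hbound := prod_Icc_le_two_sub_of_le_one_add (fun j => zetaSum_nonneg _)
      zetaSum_two_mul_le prod_Icc_one_two_zetaSum_le (le_add_self : 2 ≤ r + 2)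
    have hc : 0 < π ^ 2 / 6 - 1 := by nlinarith [pi_gt_three]
    have : 0 < 8 * (π ^ 2 / 6 - 1) / 3 / 4 ^ (r + 2) := by positivity
    linarith

/-- For every positive integer `r`, `∏_{j=1}^r ζ(2j) < 2`, with
`ζ(s) = ∑_{n ≥ 1} n^{-s}`. -/
theorem prod_zeta_even_lt_two (r : ℕ) (hr : 1 ≤ r) :
    (∏ j ∈ Finset.Icc 1 r, ∑' n : ℕ, (1 : ℝ) / ((n : ℝ) + 1) ^ (2 * j)) < 2 :=
  prod_zeta_even_lt_two_general r
end

section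
/- For every integer r ≥ 18, 5^{r² + r/2} · ∏_{j=1}^r ((2j-1)!/(2π)^{2j}) > ∏_{j=1}^r (4^j - 1)(9^j - 1). -/
open Finset Real
open scoped Nat

/-!
Since `r ^ 2 + r / 2 = ∑_{j ≤ r} (2 j - 1/2)`, both sides are products over `j ∈ [1, r]`. Using
`π ^ 2 < 10` and `√5 < 3`, the `j`-th factor on the left is at least `25 ^ j (2j-1)! / (3 · 40 ^ j)`,
while the one on the right is below `36 ^ j`. As `3 · 58 ^ j ≤ (2j-1)!` for `j ≥ 12` and
`36 · 40 < 25 · 58`, these lower bounds dominate the right-hand factors from `j = 12` on, and their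
product overtakes the right-hand side at `r = 18`, a finite computation.
-/

theorem sum_Icc_two_mul_sub_half (r : ℕ) :
    ∑ j ∈ Icc 1 r, (2 * (j : ℝ) - 1 / 2) = (r : ℝ) ^ 2 + r / 2 := by
  induction r with
  | zero => simp
  | succ r ih =>
    rw [sum_Icc_succ_top (by omega), ih]
    push_cast
    ring

theorem rpow_sq_add_half_eq_prod {a : ℝ} (ha : 0 < a) (r : ℕ) :
    a ^ ((r : ℝ) ^ 2 + r / 2) = ∏ j ∈ Icc 1 r, a ^ (2 * (j : ℝ) - 1 / 2) := by
  rw [← sum_Icc_two_mul_sub_half, rpow_sum_of_pos ha]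

theorem two_mul_pi_pow_two_mul_le (j : ℕ) : (2 * π) ^ (2 * j) ≤ 40 ^ j := by
  rw [pow_mul]
  gcongr
  nlinarith [pi_pos, pi_lt_d2]

theorem five_rpow_two_mul_sub_half (j : ℕ) : (5 : ℝ) ^ (2 * (j : ℝ) - 1 / 2) = 25 ^ j / √5 := by
  rw [rpow_sub (by norm_num), rpow_mul (by norm_num), ← sqrt_eq_rpow]
  norm_num

theorem div_le_five_rpow_mul_factorial_div (j : ℕ) :
    (25 : ℝ) ^ j * (2 * j - 1)! / (3 * 40 ^ j) ≤
      5 ^ (2 * (j : ℝ) - 1 / 2) * ((2 * j - 1)! / (2 * π) ^ (2 * j)) := by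
  have hsqrt : √5 ≤ 3 := sqrt_le_iff.mpr (by norm_num)
  rw [five_rpow_two_mul_sub_half, div_mul_div_comm]
  gcongr
  exact two_mul_pi_pow_two_mul_le j

theorem three_mul_pow_le_factorial {j : ℕ} (hj : 12 ≤ j) : 3 * 58 ^ j ≤ (2 * j - 1)! := by
  induction j, hj using Nat.le_induction with
  | base => decide
  | succ j hj ih =>
    rw [show 2 * (j + 1) - 1 = (2 * j - 1) + 1 + 1 by omega, Nat.factorial_succ, Nat.factorial_succ]
    have hk : 23 ≤ 2 * j - 1 := by omega
    have h58 : 58 ≤ ((2 * j - 1) + 1 + 1) * ((2 * j - 1) + 1) := by nlinarith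
    calc 3 * 58 ^ (j + 1) = 58 * (3 * 58 ^ j) := by ring
      _ ≤ ((2 * j - 1) + 1 + 1) * ((2 * j - 1) + 1) * (2 * j - 1)! := by gcongr
      _ = _ := by ring

theorem mul_pow_sub_one_pos {j : ℕ} (hj : 1 ≤ j) : 0 < ((4 : ℝ) ^ j - 1) * (9 ^ j - 1) :=
  mul_pos (sub_pos.mpr (one_lt_pow₀ (by norm_num) (by omega)))
    (sub_pos.mpr (one_lt_pow₀ (by norm_num) (by omega)))

theorem mul_pow_sub_one_le {j : ℕ} (hj : 12 ≤ j) :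
    ((4 : ℝ) ^ j - 1) * (9 ^ j - 1) ≤ 25 ^ j * (2 * j - 1)! / (3 * 40 ^ j) := by
  have h4 : 1 ≤ (4 : ℝ) ^ j := one_le_pow₀ (by norm_num)
  have h9 : 1 ≤ (9 : ℝ) ^ j := one_le_pow₀ (by norm_num)
  have hfact : (3 : ℝ) * 58 ^ j ≤ (2 * j - 1)! := by exact_mod_cast three_mul_pow_le_factorial hj
  rw [le_div_iff₀ (by positivity)]
  calc ((4 : ℝ) ^ j - 1) * (9 ^ j - 1) * (3 * 40 ^ j)
      ≤ 4 ^ j * 9 ^ j * (3 * 40 ^ j) := by gcongr <;> linarith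
    _ = 3 * 1440 ^ j := by rw [show (1440 : ℝ) = 4 * 9 * 40 by norm_num, mul_pow, mul_pow]; ring
    _ ≤ 3 * 1450 ^ j := by gcongr; norm_num
    _ = 25 ^ j * (3 * 58 ^ j) := by rw [show (1450 : ℝ) = 25 * 58 by norm_num, mul_pow]; ring
    _ ≤ 25 ^ j * (2 * j - 1)! := by gcongr

theorem prod_Icc_one_eighteen_lt :
    ∏ j ∈ Icc 1 18, ((4 : ℝ) ^ j - 1) * (9 ^ j - 1) <
      ∏ j ∈ Icc 1 18, (25 : ℝ) ^ j * (2 * j - 1)! / (3 * 40 ^ j) := by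
  norm_num [prod_Icc_succ_top, Nat.factorial]

theorem prod_Icc_lt_prod_Icc_of_lt_of_le {f g : ℕ → ℝ} {n r : ℕ} (hnr : n ≤ r)
    (hg : ∀ j, 1 ≤ j → 0 < g j) (hbase : ∏ j ∈ Icc 1 n, g j < ∏ j ∈ Icc 1 n, f j)
    (hle : ∀ j, n < j → g j ≤ f j) : ∏ j ∈ Icc 1 r, g j < ∏ j ∈ Icc 1 r, f j := by
  induction r, hnr using Nat.le_induction with
  | base => exact hbase
  | succ r hnr ih =>
    rw [prod_Icc_succ_top (by omega), prod_Icc_succ_top (by omega)]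
    have hprod : 0 ≤ ∏ j ∈ Icc 1 r, g j := prod_nonneg fun j hj => (hg j (mem_Icc.mp hj).1).le
    exact mul_lt_mul ih (hle _ (by omega)) (hg _ (by omega)) (hprod.trans ih.le)

/-- For `r ≥ 18`, `5^{r² + r/2} · C(r) > ∏_{j=1}^r (4^j - 1)(9^j - 1)`,
where `C(r) = ∏_{j=1}^r (2j-1)!/(2π)^{2j}`. -/
theorem five_pow_C_gt_prod (r : ℕ) (hr : 18 ≤ r) :
    (5 : ℝ) ^ ((r : ℝ) ^ 2 + (r : ℝ) / 2) *
        ∏ j ∈ Finset.Icc 1 r,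
          (Nat.factorial (2 * j - 1) : ℝ) / (2 * Real.pi) ^ (2 * j) >
      ∏ j ∈ Finset.Icc 1 r, ((4 : ℝ) ^ j - 1) * ((9 : ℝ) ^ j - 1) := by
  rw [rpow_sq_add_half_eq_prod (by norm_num), ← prod_mul_distrib, gt_iff_lt]
  calc ∏ j ∈ Icc 1 r, ((4 : ℝ) ^ j - 1) * (9 ^ j - 1)
      < ∏ j ∈ Icc 1 r, (25 : ℝ) ^ j * (2 * j - 1)! / (3 * 40 ^ j) :=
        prod_Icc_lt_prod_Icc_of_lt_of_le hr (fun _ => mul_pow_sub_one_pos)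
          prod_Icc_one_eighteen_lt fun _ hj => mul_pow_sub_one_le (by omega)
    _ ≤ _ := prod_le_prod (fun j _ => by positivity) fun j _ => div_le_five_rpow_mul_factorial_div j
end
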